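/- Let Z be a nonnegative real random variable independent of an n-dimensional standard Gaussian vector N_n, let μ0, γ0 ∈ ℝⁿ with γ0 ≠ 0, and Y = μ0 + γ0·Z + √Z·N_n. Let ρ be a law-invariant, cash-invariant, positively homogeneous risk functional on real random variables. Then for every x ∈ ℝⁿ with x ≠ 0, ρ(⟨x,Y⟩) = −⟨x,μ0⟩ + ρ( aZ + √Z·N )·‖x‖, where a = ‖γ0‖·cos[θ(γ0,x)] = ⟨x,γ0⟩/‖x‖ and N is a scalar standard normal random variable independent of Z. -/

import Mathlib

open MeasureTheory ProbabilityTheory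

/-!
Writing `‖x‖ = √(∑ xᵢ²)`, the variable `W = ‖x‖⁻¹ ⟨x, Nₙ⟩` is standard normal (a sum of independent
Gaussians) and independent of `Z`, so `(Z, W)` has the same joint law as `(Z, N)`. Since
`⟨x, Y⟩ = ‖x‖ (a Z + √Z W) + ⟨x, μ0⟩`, cash invariance and positive homogeneity reduce `ρ(⟨x, Y⟩)`
to `ρ(a Z + √Z W)`, which equals `ρ(a Z + √Z N)` by law invariance.
-/

lemma map_sum_const_mul_eq_gaussianReal {Ω ι : Type*} [MeasurableSpace Ω] {P : Measure Ω}
    [IsProbabilityMeasure P] {X : ι → Ω → ℝ} (hX : ∀ i, Measurable (X i))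
    (hind : iIndepFun X P) (hgauss : ∀ i, P.map (X i) = gaussianReal 0 1)
    (c : ι → ℝ) (s : Finset ι) :
    P.map (fun ω => ∑ i ∈ s, c i * X i ω) = gaussianReal 0 (∑ i ∈ s, c i ^ 2).toNNReal := by
  classical
  induction s using Finset.induction_on with
  | empty => simp [gaussianReal_zero_var]
  | @insert a s ha ih =>
    have hterm : P.map (fun ω => c a * X a ω) = gaussianReal 0 (c a ^ 2).toNNReal := by
      rw [show (fun ω => c a * X a ω) = (c a * ·) ∘ X a from rfl,
        ← Measure.map_map (measurable_const_mul (c a)) (hX a), hgauss a,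
        gaussianReal_map_const_mul]
      congr 1
      · ring
      · ext; simp [sq_nonneg]
    have hindep : IndepFun (fun ω => c a * X a ω) (fun ω => ∑ i ∈ s, c i * X i ω) P := by
      have := (hind.comp (fun i y => c i * y) fun i => measurable_const_mul (c i))
        |>.indepFun_finsetSum_of_notMem (fun i => (hX i).const_mul (c i)) ha
      convert this.symm using 1 <;> ext ω <;> simp [Finset.sum_apply]
    simp_rw [Finset.sum_insert ha]
    rw [← Pi.add_def, gaussianReal_add_gaussianReal_of_indepFun hindep hterm ih, add_zero,
      Real.toNNReal_add (sq_nonneg _) (Finset.sum_nonneg fun i _ => sq_nonneg _)]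

lemma sum_sq_pos_of_ne_zero {ι : Type*} [Fintype ι] {c : ι → ℝ} (hc : c ≠ 0) :
    0 < ∑ i, c i ^ 2 := by
  obtain ⟨j, hj⟩ := Function.ne_iff.mp hc
  exact Finset.sum_pos' (fun i _ => sq_nonneg (c i))
    ⟨j, Finset.mem_univ j, pow_two_pos_of_ne_zero hj⟩

lemma map_inv_sqrt_mul_sum_eq_gaussianReal {Ω ι : Type*} [Fintype ι] [MeasurableSpace Ω]
    {P : Measure Ω} [IsProbabilityMeasure P] {X : ι → Ω → ℝ} (hX : ∀ i, Measurable (X i))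
    (hind : iIndepFun X P) (hgauss : ∀ i, P.map (X i) = gaussianReal 0 1)
    {c : ι → ℝ} (hc : c ≠ 0) :
    P.map (fun ω => (√(∑ i, c i ^ 2))⁻¹ * ∑ i, c i * X i ω) = gaussianReal 0 1 := by
  have hpos := sum_sq_pos_of_ne_zero hc
  rw [show (fun ω => (√(∑ i, c i ^ 2))⁻¹ * ∑ i, c i * X i ω)
      = ((√(∑ i, c i ^ 2))⁻¹ * ·) ∘ fun ω => ∑ i, c i * X i ω from rfl,
    ← Measure.map_map (measurable_const_mul _) (by fun_prop),
    map_sum_const_mul_eq_gaussianReal hX hind hgauss, gaussianReal_map_const_mul, mul_zero]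
  congr
  ext
  simp [Real.sq_sqrt hpos.le, hpos.le, hpos.ne']

lemma IndepFun.identDistrib_prodMk {Ω α β : Type*} [MeasurableSpace Ω] [MeasurableSpace α]
    [MeasurableSpace β] {P : Measure Ω} [IsFiniteMeasure P] {Z : Ω → α} {W N : Ω → β}
    (hZ : AEMeasurable Z P) (hW : AEMeasurable W P) (hN : AEMeasurable N P)
    (hZW : IndepFun Z W P) (hZN : IndepFun Z N P) (hWN : P.map W = P.map N) :
    IdentDistrib (fun ω => (Z ω, W ω)) (fun ω => (Z ω, N ω)) P P where
  aemeasurable_fst := hZ.prodMk hW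
  aemeasurable_snd := hZ.prodMk hN
  map_eq := by
    rw [(indepFun_iff_map_prod_eq_prod_map_map hZ hW).mp hZW,
      (indepFun_iff_map_prod_eq_prod_map_map hZ hN).mp hZN, hWN]

theorem statement8_general {Ω : Type*} [MeasurableSpace Ω] (P : Measure Ω) [IsProbabilityMeasure P]
    {n : ℕ} (Z : Ω → ℝ) (Nn : Ω → Fin n → ℝ) (N : Ω → ℝ)
    (hZmeas : Measurable Z)
    (hNnmeas : Measurable Nn)
    (hNniid : iIndepFun (fun i ω => Nn ω i) P)
    (hNngauss : ∀ i, Measure.map (fun ω => Nn ω i) P = gaussianReal 0 1)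
    (hindepZNn : IndepFun Z Nn P)
    (hNmeas : Measurable N)
    (hNgauss : Measure.map N P = gaussianReal 0 1)
    (hindepZN : IndepFun Z N P)
    (μ0 γ0 : Fin n → ℝ)
    (Y : Ω → Fin n → ℝ)
    (hY : ∀ ω i, Y ω i = μ0 i + γ0 i * Z ω + Real.sqrt (Z ω) * Nn ω i)
    (ρ : (Ω → ℝ) → ℝ)
    (hρ_law : ∀ W W' : Ω → ℝ, Measure.map W P = Measure.map W' P → ρ W = ρ W')
    (hρ_cash : ∀ (W : Ω → ℝ) (c : ℝ), ρ (fun ω => W ω + c) = ρ W - c)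
    (hρ_hom : ∀ (W : Ω → ℝ) (c : ℝ), 0 < c → ρ (fun ω => c * W ω) = c * ρ W)
    (x : Fin n → ℝ) (hxne : x ≠ 0) :
    ρ (fun ω => ∑ i, x i * Y ω i)
      = -(∑ i, x i * μ0 i)
        + ρ (fun ω => ((∑ i, x i * γ0 i) / Real.sqrt (∑ i, x i ^ 2)) * Z ω
            + Real.sqrt (Z ω) * N ω) * Real.sqrt (∑ i, x i ^ 2) := by
  set s := √(∑ i, x i ^ 2)
  set a := (∑ i, x i * γ0 i) / s
  have hs : 0 < s := Real.sqrt_pos.2 (sum_sq_pos_of_ne_zero hxne)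
  have hNn : ∀ i, Measurable fun ω => Nn ω i := fun i => (measurable_pi_apply i).comp hNnmeas
  set W : Ω → ℝ := fun ω => s⁻¹ * ∑ i, x i * Nn ω i
  have hW : Measurable W := by fun_prop
  have hW_law : P.map W = gaussianReal 0 1 :=
    map_inv_sqrt_mul_sum_eq_gaussianReal hNn hNniid hNngauss hxne
  have hZW : IndepFun Z W P := hindepZNn.comp (φ := id)
    (ψ := fun v : Fin n → ℝ => s⁻¹ * ∑ i, x i * v i) measurable_id (by fun_prop)
  have hdecomp : (fun ω => ∑ i, x i * Y ω i)
      = fun ω => s * (a * Z ω + √(Z ω) * W ω) + ∑ i, x i * μ0 i := by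
    ext ω
    have hγ : ∑ i, x i * (γ0 i * Z ω) = (∑ i, x i * γ0 i) * Z ω := by
      simp only [Finset.sum_mul, mul_assoc]
    have hN : ∑ i, x i * (√(Z ω) * Nn ω i) = √(Z ω) * ∑ i, x i * Nn ω i := by
      simp only [Finset.mul_sum, mul_left_comm]
    simp only [hY, mul_add, Finset.sum_add_distrib, hγ, hN, W, a]
    field_simp
    ring
  have hlaw : ρ (fun ω => a * Z ω + √(Z ω) * W ω) = ρ (fun ω => a * Z ω + √(Z ω) * N ω) :=
    hρ_law _ _ ((IndepFun.identDistrib_prodMk hZmeas.aemeasurable hW.aemeasurable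
      hNmeas.aemeasurable hZW hindepZN (hW_law.trans hNgauss.symm)).comp
      (u := fun p : ℝ × ℝ => a * p.1 + √p.1 * p.2) (by fun_prop)).map_eq
  rw [hdecomp, hρ_cash, hρ_hom _ s hs, hlaw]
  ring

/-- For `Y = μ0 + γ0 Z + √Z Nn` with `Z` nonnegative independent of the
standard Gaussian vector `Nn`, `γ0 ≠ 0`, and a law-invariant, cash-invariant, positively
homogeneous risk functional `ρ`, for every `x ≠ 0`:
`ρ(⟨x,Y⟩) = −⟨x,μ0⟩ + ρ(a Z + √Z N) ‖x‖` where `a = ⟨x,γ0⟩/‖x‖` and `N` is a scalar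
standard normal independent of `Z`. -/
theorem statement8 {Ω : Type*} [MeasurableSpace Ω] (P : Measure Ω) [IsProbabilityMeasure P]
    {n : ℕ} (Z : Ω → ℝ) (Nn : Ω → Fin n → ℝ) (N : Ω → ℝ)
    (hZmeas : Measurable Z) (hZnonneg : ∀ ω, 0 ≤ Z ω)
    (hNnmeas : Measurable Nn)
    (hNniid : iIndepFun (fun i ω => Nn ω i) P)
    (hNngauss : ∀ i, Measure.map (fun ω => Nn ω i) P = gaussianReal 0 1)
    (hindepZNn : IndepFun Z Nn P)
    (hNmeas : Measurable N)
    (hNgauss : Measure.map N P = gaussianReal 0 1)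
    (hindepZN : IndepFun Z N P)
    (μ0 γ0 : Fin n → ℝ) (hγ0ne : γ0 ≠ 0)
    (Y : Ω → Fin n → ℝ)
    (hY : ∀ ω i, Y ω i = μ0 i + γ0 i * Z ω + Real.sqrt (Z ω) * Nn ω i)
    (ρ : (Ω → ℝ) → ℝ)
    (hρ_law : ∀ W W' : Ω → ℝ, Measure.map W P = Measure.map W' P → ρ W = ρ W')
    (hρ_cash : ∀ (W : Ω → ℝ) (c : ℝ), ρ (fun ω => W ω + c) = ρ W - c)
    (hρ_hom : ∀ (W : Ω → ℝ) (c : ℝ), 0 < c → ρ (fun ω => c * W ω) = c * ρ W)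
    (x : Fin n → ℝ) (hxne : x ≠ 0) :
    ρ (fun ω => ∑ i, x i * Y ω i)
      = -(∑ i, x i * μ0 i)
        + ρ (fun ω => ((∑ i, x i * γ0 i) / Real.sqrt (∑ i, x i ^ 2)) * Z ω
            + Real.sqrt (Z ω) * N ω) * Real.sqrt (∑ i, x i ^ 2) :=
  statement8_general P Z Nn N hZmeas hNnmeas hNniid hNngauss hindepZNn hNmeas hNgauss hindepZN μ0 γ0
    Y hY ρ hρ_law hρ_cash hρ_hom x hxne
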